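/- arXiv:1409.3483 — 2 statements merged into one kernel-verified Lean document; each statement's English description precedes it below -/
import Mathlib

section
/- Let M be an infinite type and E an equivalence relation on Set M that is bicardinality coarsening, i.e. E X Y holds whenever Cardinal.mk X = Cardinal.mk Y and Cardinal.mk ↥(Xᶜ) = Cardinal.mk ↥(Yᶜ). Then there exists a function ∂ : Set M → M realizing A[E]; that is, A[E] has a standard model on every infinite domain. -/
/-!
`E` is coarser than the kernel of `X ↦ (#X, #Xᶜ)`, so its classes are at most as many as the
pairs of cardinals `≤ #M`. For infinite `M` there are at most `#M` such cardinals (they embed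
into the ordinals `≤ (#M).ord`), hence at most `#M * #M = #M` pairs, and any injection of the
quotient by `E` into `M` realizes `A[E]`.
-/

universe u v

open Cardinal Set

theorem Cardinal.mk_Iic_le_lift {κ : Cardinal.{u}} (hκ : ℵ₀ ≤ κ) : #(Iic κ) ≤ lift.{u + 1} κ :=
  calc #(Iic κ) = #(ord '' Iic κ) := (mk_image_eq ord_injective).symm
    _ ≤ #(Iio (κ.ord + 1)) :=
        mk_le_mk_of_subset <| by
          rintro _ ⟨c, hc, rfl⟩
          exact Order.lt_add_one_iff.2 (ord_le_ord.2 hc)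
    _ = lift.{u + 1} κ := by
        rw [mk_Iio_ordinal, Ordinal.card_add_one, card_ord, add_one_eq hκ]

theorem Setoid.lift_mk_quotient_le_of_ker_le {α : Type u} {β : Type v} {s : Setoid α} (f : α → β)
    (h : Setoid.ker f ≤ s) : lift.{v} #(Quotient s) ≤ lift.{u} #(range f) :=
  calc lift.{v} #(Quotient s) ≤ lift.{v} #(Quotient (Setoid.ker f)) :=
        lift_le.2 <| mk_le_of_surjective (f := Setoid.map_of_le h) <|
          Quotient.ind fun x => ⟨⟦x⟧, rfl⟩
    _ = lift.{u} #(range f) := lift_mk_eq'.2 ⟨Setoid.quotientKerEquivRange f⟩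

theorem Setoid.exists_ker_eq_of_lift_mk_quotient_le {α : Type u} {β : Type v} (s : Setoid α)
    (h : lift.{v} #(Quotient s) ≤ lift.{u} #β) : ∃ d : α → β, ∀ x y, d x = d y ↔ s x y := by
  obtain ⟨e⟩ := lift_mk_le'.1 h
  exact ⟨fun x => e ⟦x⟧, fun x y => e.injective.eq_iff.trans Quotient.eq⟩

def Set.bicard {M : Type u} (X : Set M) : Cardinal.{u} × Cardinal.{u} := (#X, #↥Xᶜ)

theorem Set.mk_range_bicard_le (M : Type u) [Infinite M] :
    #(range (bicard : Set M → _)) ≤ lift.{u + 1} #M :=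
  calc #(range (bicard : Set M → _)) ≤ #(Iic #M ×ˢ Iic #M : Set (Cardinal × Cardinal)) :=
        mk_le_mk_of_subset <| by
          rintro _ ⟨X, rfl⟩
          exact ⟨mk_set_le X, mk_set_le Xᶜ⟩
    _ = #(Iic #M) * #(Iic #M) := by rw [mk_congr (Equiv.Set.prod _ _), mk_prod, lift_id]
    _ ≤ lift.{u + 1} #M * lift.{u + 1} #M :=
        mul_le_mul' (mk_Iic_le_lift (aleph0_le_mk M)) (mk_Iic_le_lift (aleph0_le_mk M))
    _ = lift.{u + 1} #M := mul_eq_self (by simp [aleph0_le_mk M])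

/-- If `E` is bicardinality coarsening, then `A[E]` has a standard model on every infinite
domain. -/
theorem exists_realization_of_bicardinalityCoarsening {M : Type u} [Infinite M]
    (E : Set M → Set M → Prop) (hE : Equivalence E)
    (hbc : ∀ X Y : Set M, Cardinal.mk X = Cardinal.mk Y →
      Cardinal.mk ↥(Xᶜ) = Cardinal.mk ↥(Yᶜ) → E X Y) :
    ∃ d : Set M → M, ∀ X Y : Set M, d X = d Y ↔ E X Y := by
  let s : Setoid (Set M) := ⟨E, hE⟩
  have hker : Setoid.ker Set.bicard ≤ s := fun X Y h =>
    hbc X Y (congrArg Prod.fst h) (congrArg Prod.snd h)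
  have hquot : lift.{u + 1} #(Quotient s) ≤ lift.{u + 1} #M := by
    have := Setoid.lift_mk_quotient_le_of_ker_le _ hker
    rw [lift_id'.{u, u + 1}] at this
    exact this.trans (Set.mk_range_bicard_le M)
  exact Setoid.exists_ker_eq_of_lift_mk_quotient_le s (lift_le.2 (lift_le.1 hquot))
end

section
/- (Boolos' New V is not relatively elementarily equivalent) Let E be the relation on Set ℕ given by E(X,Y) := (X.Finite ∨ Y.Finite) → X = Y (on a countably infinite domain, 'X is smaller than the universe' means X is finite). Then there exist surjective functions ∂₁, ∂₂ : Set ℕ → ℕ, both realizing A[E], such that there exists a finite set X : Set ℕ with ∂₁ X ∈ X, while for every finite set X : Set ℕ one has ∂₂ X ∉ X. Consequently New V is not naturally relatively categorical. -/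
/-- New V on a countable domain: `E X Y` iff (X or Y is finite → X = Y). -/
def NewV (X Y : Set ℕ) : Prop := (X.Finite ∨ Y.Finite) → X = Y

/-!
Send every infinite set to `0` and a finite set `X` to `c X + 1`, where `c` is a bijective
code of the finite sets of naturals. This realizes New V surjectively, and with the binary code
`c X = ∑ i ∈ X, 2 ^ i` each element of `X` is below `c X`, so no finite set contains its own
abstract. Composing with a transposition of `ℕ` gives another surjective realization, now
sending `{0}` to `0`.
-/

open Function

def Realizes {α β : Type*} (E : α → α → Prop) (d : α → β) : Prop :=
  ∀ X Y, d X = d Y ↔ E X Y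

theorem Realizes.comp {α β γ : Type*} {E : α → α → Prop} {d : α → β} {f : β → γ}
    (hd : Realizes E d) (hf : Injective f) : Realizes E (f ∘ d) := fun X Y =>
  hf.eq_iff.trans (hd X Y)

open scoped Classical in
noncomputable def finiteCode (c : Finset ℕ → ℕ) (X : Set ℕ) : ℕ :=
  if h : X.Finite then c h.toFinset + 1 else 0

section finiteCode

variable {c : Finset ℕ → ℕ}

theorem finiteCode_of_finite {X : Set ℕ} (hX : X.Finite) :
    finiteCode c X = c hX.toFinset + 1 := dif_pos hX

theorem finiteCode_of_infinite {X : Set ℕ} (hX : X.Infinite) : finiteCode c X = 0 := dif_neg hX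

theorem realizes_newV_finiteCode (hc : Injective c) : Realizes NewV (finiteCode c) := by
  intro X Y
  by_cases hX : X.Finite <;> by_cases hY : Y.Finite
  · rw [finiteCode_of_finite hX, finiteCode_of_finite hY, add_left_inj, hc.eq_iff,
      hX.toFinset_inj]
    exact ⟨fun h _ => h, fun h => h (Or.inl hX)⟩
  · rw [finiteCode_of_finite hX, finiteCode_of_infinite hY]
    exact iff_of_false (Nat.succ_ne_zero _) fun h => hY (h (Or.inl hX) ▸ hX)
  · rw [finiteCode_of_infinite hX, finiteCode_of_finite hY]
    exact iff_of_false (Nat.succ_ne_zero _).symm fun h => hX (h (Or.inr hY) ▸ hY)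
  · rw [finiteCode_of_infinite hX, finiteCode_of_infinite hY]
    exact iff_of_true rfl fun h => (h.elim hX hY).elim

theorem finiteCode_surjective (hc : Surjective c) : Surjective (finiteCode c) := by
  rintro (_ | n)
  · exact ⟨Set.univ, finiteCode_of_infinite Set.infinite_univ⟩
  · obtain ⟨s, rfl⟩ := hc n
    refine ⟨s, ?_⟩
    rw [finiteCode_of_finite s.finite_toSet, Finset.finite_toSet_toFinset]

theorem finiteCode_notMem (hc : ∀ s, ∀ i ∈ s, i ≤ c s) {X : Set ℕ} (hX : X.Finite) :
    finiteCode c X ∉ X := by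
  intro hmem
  have hle := hc hX.toFinset _ (hX.mem_toFinset.2 hmem)
  rw [finiteCode_of_finite hX] at hle
  omega

end finiteCode

/-- Boolos' New V is not relatively elementarily equivalent: there are two surjective
realizations of New V which disagree about whether some finite set contains its own
abstract. Consequently New V is not naturally relatively categorical. -/
theorem newV_not_relativelyElementarilyEquivalent :
    ∃ d₁ d₂ : Set ℕ → ℕ,
      Function.Surjective d₁ ∧ Function.Surjective d₂ ∧
      (∀ X Y : Set ℕ, d₁ X = d₁ Y ↔ NewV X Y) ∧
      (∀ X Y : Set ℕ, d₂ X = d₂ Y ↔ NewV X Y) ∧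
      (∃ X : Set ℕ, X.Finite ∧ d₁ X ∈ X) ∧
      (∀ X : Set ℕ, X.Finite → d₂ X ∉ X) := by
  let d := finiteCode fun s => ∑ i ∈ s, 2 ^ i
  have hd : Realizes NewV d := realizes_newV_finiteCode (Finset.geomSum_injective le_rfl)
  have hsurj : Surjective d := finiteCode_surjective Finset.equivBitIndices.symm.surjective
  let σ := Equiv.swap (d {0}) 0
  refine ⟨σ ∘ d, d, σ.surjective.comp hsurj, hsurj, hd.comp σ.injective, hd,
    ⟨{0}, Set.finite_singleton 0, by simp [σ]⟩,
    fun _ => finiteCode_notMem fun _ _ hi => (Finset.lt_geomSum_of_mem le_rfl hi).le⟩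
end
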